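/- arXiv:2210.05584 — 2 statements merged into one kernel-verified Lean document; each statement's English description precedes it below -/
import Mathlib

section
/- Let ρ̃ : ℕ → ℝ be non-increasing with t·ρ̃(t) non-decreasing, let f₁,...,f_t : X → ℝ be functions on a compact set with accumulated variation Δ = Σ_{τ=1}^{t-1}‖f_{τ+1}-f_τ‖_∞, and let x₁,...,x_t ∈ X satisfy max_{x*∈X} Σ_{τ=1}^t (f_τ(x*) - f_τ(x_τ)) ≤ t·ρ̃(t). Then for r̄ := (1/t)Σ_{τ=1}^t f_τ(x_τ) + ρ̃(t), and any μ ≤ t, r̄ ≥ f_μ* - Δ where f_μ* = max_{x∈X} f_μ(x). -/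
theorem stmt16 {X : Type*} [TopologicalSpace X] [CompactSpace X]
    (ρ : ℕ → ℝ) (hρ1 : ∀ a b : ℕ, a ≤ b → ρ b ≤ ρ a)
    (hρ2 : ∀ a b : ℕ, a ≤ b → (a:ℝ) * ρ a ≤ (b:ℝ) * ρ b)
    (t : ℕ) (ht : 1 ≤ t) (f : ℕ → X → ℝ) (hf : ∀ τ, Continuous (f τ))
    (x : ℕ → X) (xstar : ℕ → X) (hmax : ∀ τ, ∀ y, f τ y ≤ f τ (xstar τ))
    (D : ℕ → ℝ) (hD : ∀ τ, ∀ y, |f (τ+1) y - f τ y| ≤ D τ)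
    (Δ : ℝ) (hΔ : Δ = ∑ τ ∈ Finset.Ico 1 t, D τ)
    (hreg : ∀ y : X, ∑ τ ∈ Finset.Icc 1 t, (f τ y - f τ (x τ)) ≤ (t:ℝ) * ρ t)
    (μ : ℕ) (hμ1 : 1 ≤ μ) (hμt : μ ≤ t) :
    f μ (xstar μ) - Δ ≤ (1/(t:ℝ)) * ∑ τ ∈ Finset.Icc 1 t, f τ (x τ) + ρ t := by
  have hD0 : ∀ σ, 0 ≤ D σ := fun σ => le_trans (abs_nonneg _) (hD σ (x 0))
  set y : X := xstar μ with hy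
  -- telescoping bound
  have key : ∀ a b : ℕ, a ≤ b → |f b y - f a y| ≤ ∑ σ ∈ Finset.Ico a b, D σ := by
    intro a b hab
    induction b, hab using Nat.le_induction with
    | base => simp
    | succ n hn ih =>
      rw [Finset.sum_Ico_succ_top (by omega)]
      calc |f (n+1) y - f a y| = |(f (n+1) y - f n y) + (f n y - f a y)| := by ring_nf
        _ ≤ |f (n+1) y - f n y| + |f n y - f a y| := abs_add_le _ _
        _ ≤ D n + ∑ σ ∈ Finset.Ico a n, D σ := add_le_add (hD n y) ih
        _ = ∑ σ ∈ Finset.Ico a n, D σ + D n := by ring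
  have close : ∀ τ ∈ Finset.Icc 1 t, f μ y - Δ ≤ f τ y := by
    intro τ hτ
    simp only [Finset.mem_Icc] at hτ
    have habs : |f τ y - f μ y| ≤ Δ := by
      rcases le_total τ μ with h | h
      · have := key τ μ h
        rw [abs_sub_comm]
        refine this.trans ?_
        rw [hΔ]
        exact Finset.sum_le_sum_of_subset_of_nonneg
          (Finset.Ico_subset_Ico hτ.1 (by omega)) (fun i _ _ => hD0 i)
      · have := key μ τ h
        refine this.trans ?_
        rw [hΔ]
        exact Finset.sum_le_sum_of_subset_of_nonneg
          (Finset.Ico_subset_Ico hμ1 (by omega)) (fun i _ _ => hD0 i)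
    have := abs_le.mp habs
    linarith [this.1]
  have hsum : (t:ℝ) * (f μ y - Δ) ≤ ∑ τ ∈ Finset.Icc 1 t, f τ y := by
    have := Finset.sum_le_sum close
    have hc : (Finset.Icc 1 t).card = t := by
      rw [Nat.card_Icc]; omega
    calc (t:ℝ) * (f μ y - Δ) = ∑ _τ ∈ Finset.Icc 1 t, (f μ y - Δ) := by
          rw [Finset.sum_const, hc, nsmul_eq_mul]
      _ ≤ _ := this
  have hreg' := hreg y
  rw [Finset.sum_sub_distrib] at hreg'
  have ht0 : (0:ℝ) < t := by exact_mod_cast ht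
  rw [one_div, inv_mul_eq_div, ← sub_le_iff_le_add, le_div_iff₀ ht0]
  nlinarith [hsum, hreg']
end

section
/- Under the same setting, for each τ ≤ t define r̄_τ := (1/τ)Σ_{j=1}^τ f_j(x_j) + ρ̃(τ), and suppose for every τ ≤ t the stationary regret bound max_{x*} Σ_{j=1}^τ (f_j(x*) - f_j(x_j)) ≤ τ·ρ̃(τ) holds. Then (1/t)Σ_{τ=1}^t (r̄_τ - f_τ(x_τ)) ≤ (1/t)Σ_{τ=1}^t (2ρ̃(τ)) + 2Δ, where Δ = Σ_{τ=1}^{t-1}‖f_{τ+1}-f_τ‖_∞. -/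
theorem stmt17 {X : Type*} [TopologicalSpace X] [CompactSpace X]
    (ρ : ℕ → ℝ) (hρ1 : ∀ a b : ℕ, a ≤ b → ρ b ≤ ρ a)
    (hρ2 : ∀ a b : ℕ, a ≤ b → (a:ℝ) * ρ a ≤ (b:ℝ) * ρ b)
    (t : ℕ) (ht : 1 ≤ t) (f : ℕ → X → ℝ) (hf : ∀ τ, Continuous (f τ))
    (x : ℕ → X) (xstar : ℕ → X) (hmax : ∀ τ, ∀ y, f τ y ≤ f τ (xstar τ))
    (D : ℕ → ℝ) (hD : ∀ τ, ∀ y, |f (τ+1) y - f τ y| ≤ D τ)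
    (Δ : ℝ) (hΔ : Δ = ∑ τ ∈ Finset.Ico 1 t, D τ)
    (hreg : ∀ τ, 1 ≤ τ → τ ≤ t → ∀ y : X,
      ∑ j ∈ Finset.Icc 1 τ, (f j y - f j (x j)) ≤ (τ:ℝ) * ρ τ) :
    (1/(t:ℝ)) * ∑ τ ∈ Finset.Icc 1 t,
        (((1/(τ:ℝ)) * ∑ j ∈ Finset.Icc 1 τ, f j (x j) + ρ τ) - f τ (x τ)) ≤
      (1/(t:ℝ)) * ∑ τ ∈ Finset.Icc 1 t, 2 * ρ τ + 2 * Δ := by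
  have hD0 : ∀ k, 0 ≤ D k := fun k => le_trans (abs_nonneg _) (hD k (x 1))
  -- deviation from f 1
  have hdiff : ∀ j, 1 ≤ j → j ≤ t → ∀ y : X, |f j y - f 1 y| ≤ Δ := by
    intro j hj1 hjt y
    have key : ∀ m, 1 ≤ m → |f m y - f 1 y| ≤ ∑ k ∈ Finset.Ico 1 m, D k := by
      intro m hm
      induction m with
      | zero => omega
      | succ n ih =>
        rcases Nat.eq_or_lt_of_le hm with h | h
        · have hn0 : n = 0 := by omega
          subst hn0; simp
        · have hn : 1 ≤ n := by omega
          have h1 := ih hn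
          rw [Finset.sum_Ico_succ_top hn]
          have h2 := hD n y
          calc |f (n+1) y - f 1 y| = |(f (n+1) y - f n y) + (f n y - f 1 y)| := by
                congr 1; ring
        _ ≤ |f (n+1) y - f n y| + |f n y - f 1 y| := abs_add_le _ _
        _ ≤ ∑ k ∈ Finset.Ico 1 n, D k + D n := by linarith
    calc |f j y - f 1 y| ≤ ∑ k ∈ Finset.Ico 1 j, D k := key j hj1
      _ ≤ ∑ k ∈ Finset.Ico 1 t, D k := Finset.sum_le_sum_of_subset_of_nonneg
          (Finset.Ico_subset_Ico le_rfl hjt) (fun k _ _ => hD0 k)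
      _ = Δ := hΔ.symm
  set c := f 1 (xstar 1) with hc
  have htpos : (0:ℝ) < (t:ℝ) := by exact_mod_cast ht
  -- per-step upper bound f j (x j) ≤ c + Δ for j ≤ t
  have hub : ∀ j, 1 ≤ j → j ≤ t → f j (x j) ≤ c + Δ := by
    intro j hj1 hjt
    have h1 : f j (x j) ≤ f j (xstar j) := hmax j (x j)
    have h2 := abs_le.mp (hdiff j hj1 hjt (xstar j))
    have h3 : f 1 (xstar j) ≤ c := hmax 1 (xstar j)
    linarith [h2.2]
  -- upper bound on each r̄ term
  have hterm : ∀ τ ∈ Finset.Icc 1 t,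
      ((1/(τ:ℝ)) * ∑ j ∈ Finset.Icc 1 τ, f j (x j) + ρ τ) - f τ (x τ) ≤
        (c + Δ + ρ τ) - f τ (x τ) := by
    intro τ hτ
    rw [Finset.mem_Icc] at hτ
    have hτpos : (0:ℝ) < (τ:ℝ) := by exact_mod_cast hτ.1
    have hsum : ∑ j ∈ Finset.Icc 1 τ, f j (x j) ≤ (τ:ℝ) * (c + Δ) := by
      calc ∑ j ∈ Finset.Icc 1 τ, f j (x j) ≤ ∑ j ∈ Finset.Icc 1 τ, (c + Δ) := by
            apply Finset.sum_le_sum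
            intro j hj
            rw [Finset.mem_Icc] at hj
            exact hub j hj.1 (le_trans hj.2 hτ.2)
        _ = (τ:ℝ) * (c + Δ) := by
            rw [Finset.sum_const, Nat.card_Icc]
            simp [nsmul_eq_mul]; ring
    have : (1/(τ:ℝ)) * ∑ j ∈ Finset.Icc 1 τ, f j (x j) ≤ c + Δ := by
      rw [one_div, inv_mul_le_iff₀ hτpos]
      linarith [hsum]
    linarith
  -- lower bound on ∑ f τ (x τ)
  have hlow : (t:ℝ) * c - (t:ℝ) * Δ - (t:ℝ) * ρ t ≤
      ∑ τ ∈ Finset.Icc 1 t, f τ (x τ) := by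
    have h1 := hreg t ht le_rfl (xstar 1)
    rw [Finset.sum_sub_distrib] at h1
    have h2 : (t:ℝ) * (c - Δ) ≤ ∑ j ∈ Finset.Icc 1 t, f j (xstar 1) := by
      calc (t:ℝ) * (c - Δ) = ∑ j ∈ Finset.Icc 1 t, (c - Δ) := by
            rw [Finset.sum_const, Nat.card_Icc]; simp [nsmul_eq_mul]
        _ ≤ ∑ j ∈ Finset.Icc 1 t, f j (xstar 1) := by
            apply Finset.sum_le_sum
            intro j hj
            rw [Finset.mem_Icc] at hj
            have := abs_le.mp (hdiff j hj.1 hj.2 (xstar 1))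
            linarith [this.1]
    nlinarith
  -- ρ t ≤ average of ρ
  have hρsum : (t:ℝ) * ρ t ≤ ∑ τ ∈ Finset.Icc 1 t, ρ τ := by
    calc (t:ℝ) * ρ t = ∑ τ ∈ Finset.Icc 1 t, ρ t := by
          rw [Finset.sum_const, Nat.card_Icc]; simp [nsmul_eq_mul]
      _ ≤ ∑ τ ∈ Finset.Icc 1 t, ρ τ := by
          apply Finset.sum_le_sum
          intro τ hτ
          rw [Finset.mem_Icc] at hτ
          exact hρ1 τ t hτ.2
  -- main sum bound
  have hmain : ∑ τ ∈ Finset.Icc 1 t,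
      (((1/(τ:ℝ)) * ∑ j ∈ Finset.Icc 1 τ, f j (x j) + ρ τ) - f τ (x τ)) ≤
      ∑ τ ∈ Finset.Icc 1 t, 2 * ρ τ + (t:ℝ) * (2 * Δ) := by
    have h1 : ∑ τ ∈ Finset.Icc 1 t,
        (((1/(τ:ℝ)) * ∑ j ∈ Finset.Icc 1 τ, f j (x j) + ρ τ) - f τ (x τ)) ≤
        ∑ τ ∈ Finset.Icc 1 t, ((c + Δ + ρ τ) - f τ (x τ)) :=
      Finset.sum_le_sum hterm
    have h2 : ∑ τ ∈ Finset.Icc 1 t, ((c + Δ + ρ τ) - f τ (x τ)) =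
        (t:ℝ) * (c + Δ) + ∑ τ ∈ Finset.Icc 1 t, ρ τ -
          ∑ τ ∈ Finset.Icc 1 t, f τ (x τ) := by
      rw [Finset.sum_sub_distrib, Finset.sum_add_distrib, Finset.sum_const,
        Nat.card_Icc]
      simp [nsmul_eq_mul]; ring
    have h3 : ∑ τ ∈ Finset.Icc 1 t, 2 * ρ τ = 2 * ∑ τ ∈ Finset.Icc 1 t, ρ τ := by
      rw [Finset.mul_sum]
    rw [h3]
    rw [h2] at h1
    nlinarith
  have hrw : (1/(t:ℝ)) * ∑ τ ∈ Finset.Icc 1 t, 2 * ρ τ + 2 * Δ =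
      (1/(t:ℝ)) * (∑ τ ∈ Finset.Icc 1 t, 2 * ρ τ + (t:ℝ) * (2 * Δ)) := by
    field_simp
  rw [hrw]
  apply mul_le_mul_of_nonneg_left hmain
  positivity
end
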